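/- Let S be a finite nonempty set, c a cost function, {i,j,k} ∈ binom(S,3), and R, R' ⊆ S such that {i,j},{i,k} ∈ δ(R) and {j,k},{i,k} ∈ δ(R'). If (1) c_{ijk}^− + 2·c_{ij}^− + 2·c_{ik}^− + Σ_{{p,q,r}∈T_{{{i,j},{i,k}}}} c_{pqr}^− ≥ Σ_{{p,q,r}∈T_{δ(R)}} |c_{pqr}| + Σ_{{p,q}∈δ(R)} |c_{pq}|, (2) c_{ijk}^− + 2·c_{jk}^− + 2·c_{ik}^− + Σ_{{p,q,r}∈T_{{{j,k},{i,k}}}} c_{pqr}^− ≥ Σ_{{p,q,r}∈T_{δ(R')}} |c_{pqr}| + Σ_{{p,q}∈δ(R')} |c_{pq}|, and (3) c_{ijk} + c_{ij} + c_{ik} + c_{jk} ≤ − Σ_{{p,q,r}∈(T_{δ({i,j,k})}∩T^−)∖T_{{{i,j},{i,k},{j,k}}}} |c_{pqr}| − Σ_{{p,q}∈δ({i,j,k})∩P^−} |c_{pq}|, then there exists an optimal solution x* of min_{x∈X_S} φ_c(x) such that x*_{ik} = 1. -/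
import Mathlib


open Finset

/-- `binom(S,2)`: the set of 2-element subsets (unordered pairs) of the ground set. -/
def pairs (V : Type*) [Fintype V] [DecidableEq V] : Finset (Finset V) :=
  (univ : Finset V).powersetCard 2

/-- `binom(S,3)`: the set of 3-element subsets (unordered triples) of the ground set. -/
def triples (V : Type*) [Fintype V] [DecidableEq V] : Finset (Finset V) :=
  (univ : Finset V).powersetCard 3

/-- The feasible set `X_S`: maps `x : binom(S,2) → {0,1}` satisfying the triangle
inequalities `x_{pq} + x_{qr} - x_{pr} ≤ 1` for all pairwise distinct `p, q, r`. -/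
def feasible {V : Type*} [Fintype V] [DecidableEq V] (x : Finset V → ℝ) : Prop :=
  (∀ e ∈ pairs V, x e = 0 ∨ x e = 1) ∧
    ∀ p q r : V, p ≠ q → q ≠ r → p ≠ r →
      x {p, q} + x {q, r} - x {p, r} ≤ 1

/-- The cubic objective
`φ_c(x) = Σ_{{p,q,r}} c_{pqr} x_{pq} x_{pr} x_{qr} + Σ_{{p,q}} c_{pq} x_{pq} + c_∅`. -/
def obj {V : Type*} [Fintype V] [DecidableEq V] (c x : Finset V → ℝ) : ℝ :=
  ∑ t ∈ triples V, c t * ∏ e ∈ t.powersetCard 2, x e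
    + ∑ e ∈ pairs V, c e * x e + c ∅

/-- `δ(R)`: the pairs having exactly one element in `R`. -/
def cut {V : Type*} [Fintype V] [DecidableEq V] (R : Finset V) : Finset (Finset V) :=
  (pairs V).filter fun e => (e ∩ R).card = 1

/-- `T_{P'}`: the triples having some 2-element subset in `P'`. -/
def Tof {V : Type*} [Fintype V] [DecidableEq V] (P' : Finset (Finset V)) :
    Finset (Finset V) :=
  (triples V).filter fun t => ∃ e ∈ t.powersetCard 2, e ∈ P'


section Aux

set_option linter.unusedSectionVars false
set_option linter.unreachableTactic false
set_option linter.unusedTactic false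

variable {V : Type*} [Fintype V] [DecidableEq V]

lemma pair_eq_cases {a b c d : V} (h : ({a,b}:Finset V) = {c,d}) :
    (a=c∧b=d)∨(a=d∧b=c) := by
  have := Finset.coe_inj.mpr h
  simp only [coe_insert, coe_singleton] at this
  exact Set.pair_eq_pair_iff.mp this

lemma mem_pairs {e : Finset V} : e ∈ pairs V ↔ e.card = 2 := by
  simp [pairs, Finset.mem_powersetCard]

lemma pair_mem_pairs {p q : V} (h : p ≠ q) : ({p,q}:Finset V) ∈ pairs V :=
  mem_pairs.mpr (card_pair h)

lemma mem_triples {t : Finset V} : t ∈ triples V ↔ t.card = 3 := by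
  simp [triples, Finset.mem_powersetCard]

lemma triple_mem_triples {p q r : V} (hpq : p ≠ q) (hpr : p ≠ r) (hqr : q ≠ r) :
    ({p,q,r}:Finset V) ∈ triples V :=
  mem_triples.mpr (Finset.card_eq_three.mpr ⟨p,q,r,hpq,hpr,hqr,rfl⟩)

lemma psc2_mem_pairs {t e : Finset V} (h : e ∈ t.powersetCard 2) : e ∈ pairs V :=
  mem_pairs.mpr (Finset.mem_powersetCard.mp h).2

lemma pair_mem_psc2 {t : Finset V} {p q : V} (hp : p ∈ t) (hq : q ∈ t) (hpq : p ≠ q) :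
    ({p,q}:Finset V) ∈ t.powersetCard 2 :=
  Finset.mem_powersetCard.mpr ⟨Finset.insert_subset hp (Finset.singleton_subset_iff.mpr hq),
    card_pair hpq⟩

lemma two_subsets_of_triple {a b d : V} {e : Finset V} (hc : e.card = 2)
    (hs : e ⊆ ({a,b,d}:Finset V)) : e = {a,b} ∨ e = {a,d} ∨ e = {b,d} := by
  obtain ⟨p,q,hpq,rfl⟩ := Finset.card_eq_two.mp hc
  have hp : p = a ∨ p = b ∨ p = d := by
    have := hs (mem_insert_self p {q}); simpa using this
  have hq : q = a ∨ q = b ∨ q = d := by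
    have : q ∈ ({p,q}:Finset V) := by simp
    have := hs this; simpa using this
  rcases hp with rfl|rfl|rfl <;> rcases hq with rfl|rfl|rfl <;>
    simp_all [Finset.pair_comm] <;> tauto

-- transitivity
lemma feasible_trans {x : Finset V → ℝ} (hx : feasible x) {p q r : V}
    (hpq : p ≠ q) (hqr : q ≠ r) (hpr : p ≠ r)
    (h1 : x {p,q} = 1) (h2 : x {q,r} = 1) : x {p,r} = 1 := by
  have ht := hx.2 p q r hpq hqr hpr
  have h01 := hx.1 {p,r} (pair_mem_pairs hpr)
  rcases h01 with h|h
  · rw [h1, h2, h] at ht; norm_num at ht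
  · exact h

lemma prod01 {x : Finset V → ℝ} (hx : feasible x) (t : Finset V) :
    (∏ e ∈ t.powersetCard 2, x e) = 0 ∨ (∏ e ∈ t.powersetCard 2, x e) = 1 := by
  refine Finset.prod_induction x (fun r => r = 0 ∨ r = 1) ?_ (Or.inr rfl) ?_
  · rintro a b (rfl|rfl) (rfl|rfl) <;> norm_num
  · exact fun e he => hx.1 e (psc2_mem_pairs he)

lemma exactly_one_mem {p q : V} (hpq : p ≠ q) {R : Finset V} :
    (({p,q}:Finset V) ∩ R).card = 1 ↔ ¬ ((p ∈ R) ↔ (q ∈ R)) := by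
  by_cases hp : p ∈ R <;> by_cases hq : q ∈ R
  · have : ({p,q}:Finset V) ∩ R = {p,q} := by
      apply Finset.inter_eq_left.mpr; intro z hz; simp at hz; rcases hz with rfl|rfl <;> assumption
    rw [this, card_pair hpq]; simp [hp, hq]
  · have : ({p,q}:Finset V) ∩ R = {p} := by
      ext z; simp; constructor
      · rintro ⟨rfl|rfl, h⟩; rfl; exact absurd h hq
      · rintro rfl; exact ⟨Or.inl rfl, hp⟩
    rw [this]; simp [hp, hq]
  · have : ({p,q}:Finset V) ∩ R = {q} := by
      ext z; simp; constructor
      · rintro ⟨rfl|rfl, h⟩; exact absurd h hp; rfl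
      · rintro rfl; exact ⟨Or.inr rfl, hq⟩
    rw [this]; simp [hp, hq]
  · have : ({p,q}:Finset V) ∩ R = ∅ := by
      ext z; simp; rintro (rfl|rfl) <;> assumption
    rw [this]; simp [hp, hq]

lemma mem_cut_iff {p q : V} (hpq : p ≠ q) {R : Finset V} :
    ({p,q}:Finset V) ∈ cut R ↔ ¬ ((p ∈ R) ↔ (q ∈ R)) := by
  rw [cut, Finset.mem_filter]
  simp [pair_mem_pairs hpq, exactly_one_mem hpq]

lemma Tof_mono {P P' : Finset (Finset V)} (h : P ⊆ P') : Tof P ⊆ Tof P' := by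
  intro t ht
  rw [Tof, Finset.mem_filter] at *
  obtain ⟨h1, e, he, heP⟩ := ht
  exact ⟨h1, e, he, h heP⟩

lemma cut_subset_pairs (R : Finset V) : cut R ⊆ pairs V := Finset.filter_subset _ _
lemma Tof_subset_triples (P : Finset (Finset V)) : Tof P ⊆ triples V := Finset.filter_subset _ _

-- objective difference localized to changed pairs
lemma obj_diff (c x x' : Finset V → ℝ) (D : Finset (Finset V)) (hD : D ⊆ pairs V)
    (hagree : ∀ e ∈ pairs V, e ∉ D → x' e = x e) :
    obj c x' - obj c x =
      (∑ t ∈ Tof D, c t * ((∏ e ∈ t.powersetCard 2, x' e) - ∏ e ∈ t.powersetCard 2, x e))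
      + ∑ e ∈ D, c e * (x' e - x e) := by
  have htr : ∀ t ∈ triples V, t ∉ Tof D →
      c t * ((∏ e ∈ t.powersetCard 2, x' e) - ∏ e ∈ t.powersetCard 2, x e) = 0 := by
    intro t ht htD
    have : ∀ e ∈ t.powersetCard 2, x' e = x e := by
      intro e he
      apply hagree e (psc2_mem_pairs he)
      intro heD
      exact htD (Finset.mem_filter.mpr ⟨ht, e, he, heD⟩)
    rw [Finset.prod_congr rfl this]; ring
  have hpr : ∀ e ∈ pairs V, e ∉ D → c e * (x' e - x e) = 0 := by
    intro e he heD; rw [hagree e he heD]; ring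
  have e1 : ∑ t ∈ Tof D, c t * ((∏ e ∈ t.powersetCard 2, x' e) - ∏ e ∈ t.powersetCard 2, x e)
      = ∑ t ∈ triples V, c t * ((∏ e ∈ t.powersetCard 2, x' e) - ∏ e ∈ t.powersetCard 2, x e) :=
    Finset.sum_subset (Tof_subset_triples D) (fun t ht htD => htr t ht htD)
  have e2 : ∑ e ∈ D, c e * (x' e - x e) = ∑ e ∈ pairs V, c e * (x' e - x e) :=
    Finset.sum_subset hD (fun e he heD => hpr e he heD)
  rw [e1, e2, obj, obj]
  have g1 : ∑ t ∈ triples V, c t * ((∏ e ∈ t.powersetCard 2, x' e) - ∏ e ∈ t.powersetCard 2, x e)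
      = (∑ t ∈ triples V, c t * ∏ e ∈ t.powersetCard 2, x' e)
        - ∑ t ∈ triples V, c t * ∏ e ∈ t.powersetCard 2, x e := by
    rw [← Finset.sum_sub_distrib]
    exact Finset.sum_congr rfl (fun t _ => by ring)
  have g2 : ∑ e ∈ pairs V, c e * (x' e - x e)
      = (∑ e ∈ pairs V, c e * x' e) - ∑ e ∈ pairs V, c e * x e := by
    rw [← Finset.sum_sub_distrib]
    exact Finset.sum_congr rfl (fun e _ => by ring)
  rw [g1, g2]
  ring

open Classical in
noncomputable def ind (r : V → V → Prop) : Finset V → ℝ :=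
  fun e => if ∃ p q, p ≠ q ∧ e = {p,q} ∧ r p q then 1 else 0

lemma ind_01 (r : V → V → Prop) (e : Finset V) : ind r e = 0 ∨ ind r e = 1 := by
  unfold ind; split <;> simp

lemma ind_eq_one_iff (r : V → V → Prop) (hsym : ∀ p q, r p q → r q p) {p q : V} (h : p ≠ q) :
    ind r {p,q} = 1 ↔ r p q := by
  constructor
  · intro h1
    unfold ind at h1
    split at h1
    · next hex =>
        obtain ⟨p', q', hne, heq, hr⟩ := hex
        rcases pair_eq_cases heq with ⟨rfl, rfl⟩ | ⟨rfl, rfl⟩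
        · exact hr
        · exact hsym _ _ hr
    · norm_num at h1
  · intro hr
    unfold ind
    rw [if_pos ⟨p, q, h, rfl, hr⟩]

lemma ind_eq_zero_iff (r : V → V → Prop) (hsym : ∀ p q, r p q → r q p) {p q : V} (h : p ≠ q) :
    ind r {p,q} = 0 ↔ ¬ r p q := by
  rcases ind_01 r {p,q} with h0 | h1
  · simp [h0]; rw [← ind_eq_one_iff r hsym h, h0]; norm_num
  · simp [h1, ind_eq_one_iff r hsym h |>.mp h1]

lemma ind_feasible (r : V → V → Prop) (hsym : ∀ p q, r p q → r q p)
    (htr : ∀ p q s, p ≠ q → q ≠ s → p ≠ s → r p q → r q s → r p s) :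
    feasible (ind r) := by
  constructor
  · exact fun e _ => ind_01 r e
  · intro p q s hpq hqs hps
    rcases ind_01 r {p,q} with h1|h1 <;> rcases ind_01 r {q,s} with h2|h2 <;>
      rcases ind_01 r {p,s} with h3|h3 <;> rw [h1, h2, h3] <;> try norm_num
    exfalso
    have hr : r p s := htr p q s hpq hqs hps
      ((ind_eq_one_iff r hsym hpq).mp h1) ((ind_eq_one_iff r hsym hqs).mp h2)
    rw [(ind_eq_one_iff r hsym hps).mpr hr] at h3
    norm_num at h3

-- E relation
def Erel (x : Finset V → ℝ) (p q : V) : Prop := p = q ∨ x {p,q} = 1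

lemma Erel_refl (x : Finset V → ℝ) (p : V) : Erel x p p := Or.inl rfl

lemma Erel_symm {x : Finset V → ℝ} {p q : V} (h : Erel x p q) : Erel x q p := by
  rcases h with rfl|h
  · exact Or.inl rfl
  · right; rwa [Finset.pair_comm]

lemma Erel_trans {x : Finset V → ℝ} (hx : feasible x) {p q r : V}
    (h1 : Erel x p q) (h2 : Erel x q r) : Erel x p r := by
  rcases h1 with rfl|h1
  · exact h2
  · rcases h2 with rfl|h2
    · exact Or.inr h1
    · by_cases hpq : p = q
      · subst hpq; exact Or.inr h2
      · by_cases hqr : q = r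
        · subst hqr; exact Or.inr h1
        · by_cases hpr : p = r
          · exact Or.inl hpr
          · exact Or.inr (feasible_trans hx hpq hqr hpr h1 h2)

lemma Erel_of_eq_one {x : Finset V → ℝ} {p q : V} (h : x {p,q} = 1) : Erel x p q := Or.inr h

section moveA

variable (x : Finset V → ℝ) (R : Finset V) (a d : V)

/-- p belongs to the merged component of a and d (after cutting along R). -/
def AA (p : V) : Prop :=
  (Erel x p a ∧ ((p ∈ R) ↔ (a ∈ R))) ∨ (Erel x p d ∧ ((p ∈ R) ↔ (d ∈ R)))

/-- new relation: cut along δ(R), then merge components of a and d. -/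
def relA (p q : V) : Prop :=
  (x {p,q} = 1 ∧ ((p ∈ R) ↔ (q ∈ R))) ∨ (AA x R a d p ∧ AA x R a d q)

variable {x R a d}

lemma relA_symm : ∀ p q, relA x R a d p q → relA x R a d q p := by
  intro p q h
  rcases h with ⟨h1, h2⟩|⟨h1, h2⟩
  · left; rw [Finset.pair_comm]; exact ⟨h1, h2.symm⟩
  · right; exact ⟨h2, h1⟩

lemma AA_of_E {p q : V} (hx : feasible x) (hE : Erel x p q) (hs : (p ∈ R) ↔ (q ∈ R))
    (h : AA x R a d q) : AA x R a d p := by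
  rcases h with ⟨h1, h2⟩|⟨h1, h2⟩
  · exact Or.inl ⟨Erel_trans hx hE h1, hs.trans h2⟩
  · exact Or.inr ⟨Erel_trans hx hE h1, hs.trans h2⟩

lemma relA_trans (hx : feasible x) : ∀ p q s, p ≠ q → q ≠ s → p ≠ s →
    relA x R a d p q → relA x R a d q s → relA x R a d p s := by
  intro p q s hpq hqs hps h1 h2
  rcases h1 with ⟨hx1, hs1⟩|⟨hAp, hAq⟩
  · rcases h2 with ⟨hx2, hs2⟩|⟨hAq, hAs⟩
    · exact Or.inl ⟨feasible_trans hx hpq hqs hps hx1 hx2, hs1.trans hs2⟩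
    · exact Or.inr ⟨AA_of_E hx (Erel_of_eq_one hx1) hs1 hAq, hAs⟩
  · rcases h2 with ⟨hx2, hs2⟩|⟨hAq, hAs⟩
    · exact Or.inr ⟨hAp, AA_of_E hx (Erel_symm (Erel_of_eq_one hx2)) hs2.symm hAq⟩
    · exact Or.inr ⟨hAp, hAs⟩

/-- if a p-side and q-side relation through opposite branches, sides of a and d agree -/
lemma relA_agree (hx : feasible x) (hcad : ¬ ((a ∈ R) ↔ (d ∈ R))) {p q : V} (hpq : p ≠ q)
    (hs : (p ∈ R) ↔ (q ∈ R)) (h : relA x R a d p q) : x {p,q} = 1 := by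
  rcases h with ⟨h1, _⟩|⟨hAp, hAq⟩
  · exact h1
  · rcases hAp with ⟨hE1, hs1⟩|⟨hE1, hs1⟩ <;> rcases hAq with ⟨hE2, hs2⟩|⟨hE2, hs2⟩
    · have : Erel x p q := Erel_trans hx hE1 (Erel_symm hE2)
      rcases this with rfl|h; exact absurd rfl hpq; exact h
    · exact absurd ((hs1.symm.trans hs).trans hs2) hcad
    · exact absurd ((hs1.symm.trans hs).trans hs2).symm hcad
    · have : Erel x p q := Erel_trans hx hE1 (Erel_symm hE2)
      rcases this with rfl|h; exact absurd rfl hpq; exact h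

end moveA

lemma abs_bound01 {c u v : ℝ} (hu : u = 0 ∨ u = 1) (hv : v = 0 ∨ v = 1) :
    c * (u - v) ≤ |c| := by
  have h1 := le_abs_self c
  have h2 := abs_nonneg c
  have h3 := neg_abs_le c
  rcases hu with rfl|rfl <;> rcases hv with rfl|rfl <;> nlinarith

lemma max_neg_le_abs (c : ℝ) : max (-c) 0 ≤ |c| :=
  max_le (by rw [← abs_neg]; exact le_abs_self _) (abs_nonneg _)

lemma moveA_main (c : Finset V → ℝ) (a b d : V) (hab : a ≠ b) (had : a ≠ d) (hbd : b ≠ d)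
    (R : Finset V)
    (hcab : ({a,b} : Finset V) ∈ cut R) (hcad : ({a,d} : Finset V) ∈ cut R)
    (hc : max (-(c {a,b,d})) 0 + 2 * max (-(c {a,b})) 0 + 2 * max (-(c {a,d})) 0
        + ∑ t ∈ Tof {({a,b} : Finset V), ({a,d} : Finset V)}, max (-(c t)) 0 ≥
        ∑ t ∈ Tof (cut R), |c t| + ∑ e ∈ cut R, |c e|)
    (x : Finset V → ℝ) (hx : feasible x)
    (xab : x {a,b} = 0) (xad : x {a,d} = 0) (xbd : x {b,d} = 1) :
    ∃ x', feasible x' ∧ obj c x' ≤ obj c x ∧ x' {a,d} = 1 := by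
  have hsideab : ¬ ((a ∈ R) ↔ (b ∈ R)) := (mem_cut_iff hab).mp hcab
  have hsidead : ¬ ((a ∈ R) ↔ (d ∈ R)) := (mem_cut_iff had).mp hcad
  have hsidebd : (b ∈ R) ↔ (d ∈ R) := by tauto
  set x' : Finset V → ℝ := ind (relA x R a d) with hx'def
  have hsym := @relA_symm V _ _ x R a d
  have htrans := @relA_trans V _ _ x R a d hx
  have hfeas : feasible x' := ind_feasible _ hsym htrans
  have hone : ∀ p q : V, p ≠ q → relA x R a d p q → x' {p,q} = 1 :=
    fun p q h hr => (ind_eq_one_iff _ hsym h).mpr hr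
  -- the three new values
  have hAa : AA x R a d a := Or.inl ⟨Erel_refl x a, Iff.rfl⟩
  have hAd : AA x R a d d := Or.inr ⟨Erel_refl x d, Iff.rfl⟩
  have hAb : AA x R a d b := Or.inr ⟨Erel_of_eq_one xbd, hsidebd⟩
  have x'ad : x' {a,d} = 1 := hone a d had (Or.inr ⟨hAa, hAd⟩)
  have x'ab : x' {a,b} = 1 := hone a b hab (Or.inr ⟨hAa, hAb⟩)
  have x'bd : x' {b,d} = 1 := hone b d hbd (Or.inl ⟨xbd, hsidebd⟩)
  -- agreement off the cut
  have hagree : ∀ e ∈ pairs V, e ∉ cut R → x' e = x e := by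
    intro e he heD
    obtain ⟨p, q, hpq, rfl⟩ := Finset.card_eq_two.mp (mem_pairs.mp he)
    have hside : (p ∈ R) ↔ (q ∈ R) := by
      have := (mem_cut_iff hpq (R := R)).not.mp heD
      tauto
    rcases hx.1 _ he with h0|h1
    · rw [h0]
      apply (ind_eq_zero_iff _ hsym hpq).mpr
      intro hrel
      have := relA_agree hx hsidead hpq hside hrel
      rw [this] at h0; norm_num at h0
    · rw [h1]; exact hone p q hpq (Or.inl ⟨h1, hside⟩)
  -- abbreviations
  set t0 : Finset V := {a,b,d} with ht0def
  set P2 : Finset (Finset V) := {({a,b} : Finset V), ({a,d} : Finset V)} with hP2def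
  have ht0card : t0 ∈ triples V := triple_mem_triples hab had hbd
  have habP2 : ({a,b}:Finset V) ∈ P2 := by simp [hP2def]
  have hadP2 : ({a,d}:Finset V) ∈ P2 := by simp [hP2def]
  have habt0 : ({a,b}:Finset V) ∈ t0.powersetCard 2 :=
    pair_mem_psc2 (by simp [ht0def]) (by simp [ht0def]) hab
  have hadt0 : ({a,d}:Finset V) ∈ t0.powersetCard 2 :=
    pair_mem_psc2 (by simp [ht0def]) (by simp [ht0def]) had
  have ht0P2 : t0 ∈ Tof P2 := Finset.mem_filter.mpr ⟨ht0card, ⟨{a,b}, habt0, habP2⟩⟩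
  have ht0cut : t0 ∈ Tof (cut R) := Finset.mem_filter.mpr ⟨ht0card, ⟨{a,b}, habt0, hcab⟩⟩
  have hP2sub : Tof P2 ⊆ Tof (cut R) := by
    apply Tof_mono
    intro e he
    simp only [hP2def, Finset.mem_insert, Finset.mem_singleton] at he
    rcases he with rfl|rfl
    · exact hcab
    · exact hcad
  -- products
  have hprodP2 : ∀ t ∈ Tof P2, (∏ e ∈ t.powersetCard 2, x e) = 0 := by
    intro t ht
    obtain ⟨_, e, he, heP⟩ := Finset.mem_filter.mp ht
    simp only [hP2def, Finset.mem_insert, Finset.mem_singleton] at heP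
    rcases heP with rfl|rfl
    · exact Finset.prod_eq_zero he xab
    · exact Finset.prod_eq_zero he xad
  have hprodt0 : (∏ e ∈ t0.powersetCard 2, x' e) = 1 := by
    apply Finset.prod_eq_one
    intro e he
    obtain ⟨hsub, hcard⟩ := Finset.mem_powersetCard.mp he
    rcases two_subsets_of_triple hcard hsub with rfl|rfl|rfl
    · exact x'ab
    · exact x'ad
    · exact x'bd
  -- the objective bound
  have hdiff := obj_diff c x x' (cut R) (cut_subset_pairs R) hagree
  have key_tri : ∀ t ∈ Tof (cut R),
      c t * ((∏ e ∈ t.powersetCard 2, x' e) - ∏ e ∈ t.powersetCard 2, x e)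
        + ((if t = t0 then max (-(c t)) 0 else 0) + (if t ∈ Tof P2 then max (-(c t)) 0 else 0))
        ≤ |c t| := by
    intro t ht
    have hP'01 := prod01 hfeas t
    have hP01 := prod01 hx t
    by_cases h0 : t = t0
    · subst h0
      rw [if_pos rfl, if_pos ht0P2, hprodt0, hprodP2 t0 ht0P2]
      rcases le_total (c t0) 0 with h|h
      · rw [abs_of_nonpos h, max_eq_left (by linarith)]; linarith
      · rw [abs_of_nonneg h, max_eq_right (by linarith)]; linarith
    · rw [if_neg h0]
      by_cases hP2m : t ∈ Tof P2
      · rw [if_pos hP2m, hprodP2 t hP2m]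
        have hmax := max_neg_le_abs (c t)
        rcases hP'01 with h'|h' <;> rw [h']
        · simpa using hmax
        · rcases le_total (c t) 0 with h|h
          · rw [abs_of_nonpos h, max_eq_left (by linarith)]; linarith
          · rw [abs_of_nonneg h, max_eq_right (by linarith)]; linarith
      · rw [if_neg hP2m]
        rw [add_zero, add_zero]
        exact abs_bound01 hP'01 hP01
  have key_pair : ∀ e ∈ cut R,
      c e * (x' e - x e)
        + ((if e = ({a,b}:Finset V) then 2 * max (-(c e)) 0 else 0)
          + (if e = ({a,d}:Finset V) then 2 * max (-(c e)) 0 else 0)) ≤ |c e| := by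
    intro e he
    by_cases h1 : e = ({a,b}:Finset V)
    · subst h1
      have hne : ({a,b}:Finset V) ≠ ({a,d}:Finset V) := by
        intro h
        rcases pair_eq_cases h with ⟨_, h2⟩|⟨h2, _⟩
        · exact hbd h2
        · exact had h2
      rw [if_pos rfl, if_neg hne, x'ab, xab]
      rcases le_total (c {a,b}) 0 with h|h
      · rw [abs_of_nonpos h, max_eq_left (by linarith)]; linarith
      · rw [abs_of_nonneg h, max_eq_right (by linarith)]; linarith
    · rw [if_neg h1]
      by_cases h2 : e = ({a,d}:Finset V)
      · subst h2
        rw [if_pos rfl, x'ad, xad]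
        rcases le_total (c {a,d}) 0 with h|h
        · rw [abs_of_nonpos h, max_eq_left (by linarith)]; linarith
        · rw [abs_of_nonneg h, max_eq_right (by linarith)]; linarith
      · rw [if_neg h2, add_zero, add_zero]
        exact abs_bound01 (ind_01 _ e) (hx.1 e (cut_subset_pairs R he))
  -- sum the bounds
  have hsum_tri := Finset.sum_le_sum key_tri
  have hsum_pair := Finset.sum_le_sum key_pair
  rw [Finset.sum_add_distrib, Finset.sum_add_distrib, Finset.sum_ite_eq' (Tof (cut R)) t0,
    if_pos ht0cut, Finset.sum_ite_mem, Finset.inter_eq_right.mpr hP2sub] at hsum_tri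
  rw [Finset.sum_add_distrib, Finset.sum_add_distrib,
    Finset.sum_ite_eq' (cut R) ({a,b}:Finset V), if_pos hcab,
    Finset.sum_ite_eq' (cut R) ({a,d}:Finset V), if_pos hcad] at hsum_pair
  refine ⟨x', hfeas, ?_, x'ad⟩
  have := hc
  rw [ht0def] at *
  linarith

section moveB

variable (x : Finset V → ℝ) (Q : Finset V)

/-- new relation: isolate Q as its own cluster. -/
def relB (p q : V) : Prop :=
  (x {p,q} = 1 ∧ p ∉ Q ∧ q ∉ Q) ∨ (p ∈ Q ∧ q ∈ Q)

variable {x Q}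

lemma relB_symm : ∀ p q, relB x Q p q → relB x Q q p := by
  intro p q h
  rcases h with ⟨h1, h2, h3⟩|⟨h1, h2⟩
  · left; rw [Finset.pair_comm]; exact ⟨h1, h3, h2⟩
  · right; exact ⟨h2, h1⟩

lemma relB_trans (hx : feasible x) : ∀ p q s, p ≠ q → q ≠ s → p ≠ s →
    relB x Q p q → relB x Q q s → relB x Q p s := by
  intro p q s hpq hqs hps h1 h2
  rcases h1 with ⟨h1, hp, hq⟩|⟨hp, hq⟩
  · rcases h2 with ⟨h2, _, hs⟩|⟨hq', _⟩
    · exact Or.inl ⟨feasible_trans hx hpq hqs hps h1 h2, hp, hs⟩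
    · exact absurd hq' hq
  · rcases h2 with ⟨_, hq', _⟩|⟨_, hs⟩
    · exact absurd hq hq'
    · exact Or.inr ⟨hp, hs⟩

end moveB

lemma moveB_main (c : Finset V → ℝ) (i j k : V) (hij : i ≠ j) (hik : i ≠ k) (hjk : j ≠ k)
    (h3 : c {i, j, k} + c {i, j} + c {i, k} + c {j, k} ≤
        - ∑ t ∈ ((Tof (cut {i, j, k}) ∩ (triples V).filter fun t => c t < 0) \
            Tof {({i, j} : Finset V), ({i, k} : Finset V), ({j, k} : Finset V)}), |c t|
        - ∑ e ∈ (cut {i, j, k}).filter (fun e => c e < 0), |c e|)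
    (x : Finset V → ℝ) (hx : feasible x)
    (xij : x {i,j} = 0) (xik : x {i,k} = 0) (xjk : x {j,k} = 0) :
    ∃ x', feasible x' ∧ obj c x' ≤ obj c x ∧ x' {i,k} = 1 := by
  set Q : Finset V := {i,j,k} with hQdef
  have hiQ : i ∈ Q := by simp [hQdef]
  have hjQ : j ∈ Q := by simp [hQdef]
  have hkQ : k ∈ Q := by simp [hQdef]
  have hQcard : Q.card = 3 := Finset.card_eq_three.mpr ⟨i,j,k,hij,hik,hjk,rfl⟩
  have hQtriple : Q ∈ triples V := mem_triples.mpr hQcard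
  set x' : Finset V → ℝ := ind (relB x Q) with hx'def
  have hsym := @relB_symm V _ _ x Q
  have htrans := @relB_trans V _ _ x Q hx
  have hfeas : feasible x' := ind_feasible _ hsym htrans
  have hone : ∀ p q : V, p ≠ q → relB x Q p q → x' {p,q} = 1 :=
    fun p q h hr => (ind_eq_one_iff _ hsym h).mpr hr
  have x'ij : x' {i,j} = 1 := hone i j hij (Or.inr ⟨hiQ, hjQ⟩)
  have x'ik : x' {i,k} = 1 := hone i k hik (Or.inr ⟨hiQ, hkQ⟩)
  have x'jk : x' {j,k} = 1 := hone j k hjk (Or.inr ⟨hjQ, hkQ⟩)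
  -- crossing pairs become 0
  have x'cross : ∀ p q : V, p ≠ q → (p ∈ Q) ≠ (q ∈ Q) → x' {p,q} = 0 := by
    intro p q hpq hcross
    apply (ind_eq_zero_iff _ hsym hpq).mpr
    rintro (⟨_, hp, hq⟩|⟨hp, hq⟩)
    · exact hcross (by simp [hp, hq])
    · exact hcross (by simp [hp, hq])
  set QP : Finset (Finset V) := {({i,j}:Finset V), ({i,k}:Finset V), ({j,k}:Finset V)} with hQPdef
  set D : Finset (Finset V) := cut Q ∪ QP with hDdef
  have hijik : ({i,j}:Finset V) ≠ ({i,k}:Finset V) := by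
    intro h; rcases pair_eq_cases h with ⟨_, h2⟩|⟨h2, _⟩
    · exact hjk h2
    · exact hik h2
  have hijjk : ({i,j}:Finset V) ≠ ({j,k}:Finset V) := by
    intro h; rcases pair_eq_cases h with ⟨h2, _⟩|⟨h2, h3⟩
    · exact hij h2
    · exact hik h2
  have hikjk : ({i,k}:Finset V) ≠ ({j,k}:Finset V) := by
    intro h; rcases pair_eq_cases h with ⟨h2, _⟩|⟨h2, _⟩
    · exact hij h2
    · exact hik h2
  have hQPpairs : ∀ e ∈ QP, e ∈ pairs V := by
    intro e he
    simp only [hQPdef, Finset.mem_insert, Finset.mem_singleton] at he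
    rcases he with rfl|rfl|rfl
    · exact pair_mem_pairs hij
    · exact pair_mem_pairs hik
    · exact pair_mem_pairs hjk
  have hQPzero : ∀ e ∈ QP, x e = 0 := by
    intro e he
    simp only [hQPdef, Finset.mem_insert, Finset.mem_singleton] at he
    rcases he with rfl|rfl|rfl <;> assumption
  have hQPsubQ : ∀ e ∈ QP, e ⊆ Q := by
    intro e he
    simp only [hQPdef, Finset.mem_insert, Finset.mem_singleton] at he
    rcases he with rfl|rfl|rfl <;> intro z hz <;> simp only [Finset.mem_insert,
      Finset.mem_singleton] at hz <;> rcases hz with rfl|rfl <;> simp [hQdef]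
  have hDsub : D ⊆ pairs V := by
    rw [hDdef]
    exact Finset.union_subset (cut_subset_pairs Q) (fun e he => hQPpairs e he)
  have hdisj : Disjoint (cut Q) QP := by
    rw [Finset.disjoint_right]
    intro e he hcut
    have hsub := hQPsubQ e he
    have hcard : e.card = 2 := mem_pairs.mp (hQPpairs e he)
    have : (e ∩ Q).card = 1 := (Finset.mem_filter.mp hcut).2
    rw [Finset.inter_eq_left.mpr hsub] at this
    rw [hcard] at this; norm_num at this
  -- agreement off D
  have hagree : ∀ e ∈ pairs V, e ∉ D → x' e = x e := by
    intro e he heD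
    rw [hDdef, Finset.mem_union, not_or] at heD
    obtain ⟨heC, heP⟩ := heD
    obtain ⟨p, q, hpq, rfl⟩ := Finset.card_eq_two.mp (mem_pairs.mp he)
    have hsame : (p ∈ Q) ↔ (q ∈ Q) := by
      have := (mem_cut_iff hpq (R := Q)).not.mp heC
      tauto
    by_cases hpQ : p ∈ Q
    · exfalso
      have hqQ : q ∈ Q := hsame.mp hpQ
      have hsub : ({p,q}:Finset V) ⊆ Q :=
        Finset.insert_subset hpQ (Finset.singleton_subset_iff.mpr hqQ)
      rcases two_subsets_of_triple (card_pair hpq) (hQdef ▸ hsub) with h|h|h <;>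
        exact heP (by simp [hQPdef, h])
    · have hqQ : q ∉ Q := fun h => hpQ (hsame.mpr h)
      rcases hx.1 _ he with h0|h1
      · rw [h0]
        apply (ind_eq_zero_iff _ hsym hpq).mpr
        rintro (⟨h1, _, _⟩|⟨hp, _⟩)
        · rw [h1] at h0; norm_num at h0
        · exact hpQ hp
      · rw [h1]; exact hone p q hpq (Or.inl ⟨h1, hpQ, hqQ⟩)
  have hdiff := obj_diff c x x' D hDsub hagree
  -- pair sums over D
  have hDsplit : ∑ e ∈ D, c e * (x' e - x e)
      = ∑ e ∈ cut Q, c e * (x' e - x e) + ∑ e ∈ QP, c e * (x' e - x e) := by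
    rw [hDdef]; exact Finset.sum_union hdisj
  have hQPsum : ∑ e ∈ QP, c e * (x' e - x e) = c {i,j} + c {i,k} + c {j,k} := by
    rw [hQPdef]
    rw [Finset.sum_insert (by simp [hijik, hijjk]), Finset.sum_insert (by simp [hikjk]),
      Finset.sum_singleton, x'ij, x'ik, x'jk, xij, xik, xjk]
    ring
  have hcutbound : ∀ e ∈ cut Q, c e * (x' e - x e) ≤ if c e < 0 then |c e| else 0 := by
    intro e he
    obtain ⟨hep, hcard1⟩ := Finset.mem_filter.mp he
    obtain ⟨p, q, hpq, rfl⟩ := Finset.card_eq_two.mp (mem_pairs.mp hep)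
    have hcross : (p ∈ Q) ≠ (q ∈ Q) := by
      have h1 := (exactly_one_mem hpq (R := Q)).mp hcard1
      intro hcon
      exact h1 (iff_of_eq hcon)
    rw [x'cross p q hpq hcross]
    rcases hx.1 _ hep with h0|h1
    · rw [h0]; split <;> simp [abs_nonneg]
    · rw [h1]
      by_cases hneg : c {p,q} < 0
      · rw [if_pos hneg, abs_of_neg hneg]; linarith
      · rw [if_neg hneg]; push_neg at hneg; linarith
  have hcutsum : ∑ e ∈ cut Q, c e * (x' e - x e)
      ≤ ∑ e ∈ (cut Q).filter (fun e => c e < 0), |c e| := by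
    calc ∑ e ∈ cut Q, c e * (x' e - x e) ≤ ∑ e ∈ cut Q, if c e < 0 then |c e| else 0 :=
          Finset.sum_le_sum hcutbound
      _ = ∑ e ∈ (cut Q).filter (fun e => c e < 0), |c e| := (Finset.sum_filter _ _).symm
  -- triple sums
  set S3 : Finset (Finset V) :=
    ((Tof (cut Q) ∩ (triples V).filter fun t => c t < 0) \ Tof QP) with hS3def
  have hijpsc : ({i,j}:Finset V) ∈ Q.powersetCard 2 := pair_mem_psc2 hiQ hjQ hij
  have hQTofD : Q ∈ Tof D := Finset.mem_filter.mpr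
    ⟨hQtriple, ⟨{i,j}, hijpsc, Finset.mem_union_right _ (by simp [hQPdef])⟩⟩
  have hQTofQP : Q ∈ Tof QP := Finset.mem_filter.mpr
    ⟨hQtriple, ⟨{i,j}, hijpsc, by simp [hQPdef]⟩⟩
  have hprodQ' : (∏ e ∈ Q.powersetCard 2, x' e) = 1 := by
    apply Finset.prod_eq_one
    intro e he
    obtain ⟨hsub, hcard⟩ := Finset.mem_powersetCard.mp he
    rcases two_subsets_of_triple hcard (hQdef ▸ hsub) with rfl|rfl|rfl
    · exact x'ij
    · exact x'ik
    · exact x'jk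
  have hprodQ : (∏ e ∈ Q.powersetCard 2, x e) = 0 := Finset.prod_eq_zero hijpsc xij
  -- every other triple of Tof D has x'-product 0 and is bounded
  have key_tri : ∀ t ∈ Tof D \ {Q},
      c t * ((∏ e ∈ t.powersetCard 2, x' e) - ∏ e ∈ t.powersetCard 2, x e)
        ≤ if t ∈ S3 then |c t| else 0 := by
    intro t ht
    obtain ⟨htD, htQ⟩ := Finset.mem_sdiff.mp ht
    rw [Finset.mem_singleton] at htQ
    obtain ⟨httriples, e, hepsc, heD⟩ := Finset.mem_filter.mp htD
    have htcard : t.card = 3 := mem_triples.mp httriples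
    -- a vertex of t outside Q
    have hv : ∃ v ∈ t, v ∉ Q := by
      by_contra hcon
      push_neg at hcon
      exact htQ (Finset.eq_of_subset_of_card_le hcon (by rw [htcard, hQcard]))
    obtain ⟨v, hvt, hvQ⟩ := hv
    -- a vertex of t inside Q
    have hw : ∃ w ∈ t, w ∈ Q := by
      have hesub : e ⊆ t := (Finset.mem_powersetCard.mp hepsc).1
      rw [hDdef, Finset.mem_union] at heD
      rcases heD with hcut|hqp
      · have h1 : (e ∩ Q).card = 1 := (Finset.mem_filter.mp hcut).2
        have : (e ∩ Q).Nonempty := Finset.card_pos.mp (by rw [h1]; norm_num)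
        obtain ⟨w, hw⟩ := this
        exact ⟨w, hesub (Finset.mem_of_mem_inter_left hw), Finset.mem_of_mem_inter_right hw⟩
      · have : (i : V) ∈ e ∨ True := Or.inr trivial
        have hesubQ := hQPsubQ e hqp
        have : e.Nonempty := Finset.card_pos.mp
          (by rw [mem_pairs.mp (hQPpairs e hqp)]; norm_num)
        obtain ⟨w, hw⟩ := this
        exact ⟨w, hesub hw, hesubQ hw⟩
    obtain ⟨w, hwt, hwQ⟩ := hw
    have hwv : w ≠ v := fun h => hvQ (h ▸ hwQ)
    have hprod' : (∏ e ∈ t.powersetCard 2, x' e) = 0 :=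
      Finset.prod_eq_zero (pair_mem_psc2 hwt hvt hwv)
        (x'cross w v hwv (by simp [hwQ, hvQ]))
    rw [hprod']
    rcases prod01 hx t with hP|hP
    · rw [hP]; split <;> simp [abs_nonneg]
    · rw [hP]
      -- product is 1; no pair of t lies in QP
      have hnotQP : t ∉ Tof QP := by
        intro hmem
        obtain ⟨_, e', he'psc, he'QP⟩ := Finset.mem_filter.mp hmem
        have : x e' = 0 := hQPzero e' he'QP
        have := Finset.prod_eq_zero he'psc this
        rw [this] at hP; norm_num at hP
      by_cases hneg : c t < 0
      · have htcut : t ∈ Tof (cut Q) := by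
          rw [hDdef, Finset.mem_union] at heD
          rcases heD with hcut|hqp
          · exact Finset.mem_filter.mpr ⟨httriples, e, hepsc, hcut⟩
          · exact absurd (Finset.mem_filter.mpr ⟨httriples, e, hepsc, hqp⟩) hnotQP
        have htS3 : t ∈ S3 := by
          rw [hS3def, Finset.mem_sdiff, Finset.mem_inter]
          exact ⟨⟨htcut, Finset.mem_filter.mpr ⟨httriples, hneg⟩⟩, hnotQP⟩
        rw [if_pos htS3, abs_of_neg hneg]; linarith
      · push_neg at hneg
        split <;> [linarith [abs_nonneg (c t)]; linarith]
  have hQS3 : Q ∉ S3 := by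
    rw [hS3def, Finset.mem_sdiff]
    rintro ⟨_, h⟩
    exact h hQTofQP
  have hS3sub : S3 ⊆ Tof D \ {Q} := by
    intro t ht
    rw [Finset.mem_sdiff, Finset.mem_singleton]
    constructor
    · have : t ∈ Tof (cut Q) := (Finset.mem_inter.mp (Finset.mem_sdiff.mp ht).1).1
      exact Tof_mono (by rw [hDdef]; exact Finset.subset_union_left) this
    · rintro rfl; exact hQS3 ht
  have htri_sum : ∑ t ∈ Tof D, c t * ((∏ e ∈ t.powersetCard 2, x' e) - ∏ e ∈ t.powersetCard 2, x e)
      ≤ c Q + ∑ t ∈ S3, |c t| := by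
    rw [Finset.sum_eq_sum_sdiff_singleton_add hQTofD]
    have h1 : c Q * ((∏ e ∈ Q.powersetCard 2, x' e) - ∏ e ∈ Q.powersetCard 2, x e) = c Q := by
      rw [hprodQ', hprodQ]; ring
    rw [h1]
    have h2 : ∑ t ∈ Tof D \ {Q},
        c t * ((∏ e ∈ t.powersetCard 2, x' e) - ∏ e ∈ t.powersetCard 2, x e)
        ≤ ∑ t ∈ S3, |c t| := by
      calc _ ≤ ∑ t ∈ Tof D \ {Q}, if t ∈ S3 then |c t| else 0 := Finset.sum_le_sum key_tri
        _ = ∑ t ∈ (Tof D \ {Q}) ∩ S3, |c t| := Finset.sum_ite_mem _ _ _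
        _ = ∑ t ∈ S3, |c t| := by rw [Finset.inter_eq_right.mpr hS3sub]
    linarith
  refine ⟨x', hfeas, ?_, x'ik⟩
  have hfinal := h3
  rw [hQdef] at *
  linarith

lemma feasible_congr {x y : Finset V → ℝ} (h : ∀ e ∈ pairs V, y e = x e) (hx : feasible x) :
    feasible y := by
  constructor
  · intro e he; rw [h e he]; exact hx.1 e he
  · intro p q r hpq hqr hpr
    rw [h _ (pair_mem_pairs hpq), h _ (pair_mem_pairs hqr), h _ (pair_mem_pairs hpr)]
    exact hx.2 p q r hpq hqr hpr

lemma obj_congr (c : Finset V → ℝ) {x y : Finset V → ℝ} (h : ∀ e ∈ pairs V, y e = x e) :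
    obj c y = obj c x := by
  unfold obj
  congr 2
  · apply Finset.sum_congr rfl
    intro t _
    congr 1
    exact Finset.prod_congr rfl (fun e he => h e (psc2_mem_pairs he))
  · exact Finset.sum_congr rfl (fun e he => by rw [h e he])

theorem triangle_edge_join_persistency' {V : Type*} [Fintype V] [DecidableEq V] [Nonempty V]
    (c : Finset V → ℝ) (i j k : V) (hij : i ≠ j) (hik : i ≠ k) (hjk : j ≠ k)
    (R R' : Finset V)
    (hR1 : ({i, j} : Finset V) ∈ cut R) (hR2 : ({i, k} : Finset V) ∈ cut R)
    (hR'1 : ({j, k} : Finset V) ∈ cut R') (hR'2 : ({i, k} : Finset V) ∈ cut R')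
    (h1 : max (-(c {i, j, k})) 0 + 2 * max (-(c {i, j})) 0 + 2 * max (-(c {i, k})) 0
        + ∑ t ∈ Tof {({i, j} : Finset V), ({i, k} : Finset V)}, max (-(c t)) 0 ≥
        ∑ t ∈ Tof (cut R), |c t| + ∑ e ∈ cut R, |c e|)
    (h2 : max (-(c {i, j, k})) 0 + 2 * max (-(c {j, k})) 0 + 2 * max (-(c {i, k})) 0
        + ∑ t ∈ Tof {({j, k} : Finset V), ({i, k} : Finset V)}, max (-(c t)) 0 ≥
        ∑ t ∈ Tof (cut R'), |c t| + ∑ e ∈ cut R', |c e|)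
    (h3 : c {i, j, k} + c {i, j} + c {i, k} + c {j, k} ≤
        - ∑ t ∈ ((Tof (cut {i, j, k}) ∩ (triples V).filter fun t => c t < 0) \
            Tof {({i, j} : Finset V), ({i, k} : Finset V), ({j, k} : Finset V)}), |c t|
        - ∑ e ∈ (cut {i, j, k}).filter (fun e => c e < 0), |c e|) :
    ∃ xstar : Finset V → ℝ, feasible xstar ∧
      (∀ x : Finset V → ℝ, feasible x → obj c xstar ≤ obj c x) ∧
      xstar {i, k} = 1 := by
  classical
  -- a minimizer exists among boolean assignments
  set toR : (Finset V → Bool) → (Finset V → ℝ) := fun b e => if b e then 1 else 0 with htoR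
  set s : Finset (Finset V → Bool) := Finset.univ.filter (fun b => feasible (toR b)) with hs
  have hbfalse : (fun _ => false : Finset V → Bool) ∈ s := by
    rw [hs, Finset.mem_filter]
    refine ⟨Finset.mem_univ _, ?_, ?_⟩
    · intro e _; left; simp [htoR]
    · intro p q r _ _ _; simp [htoR]
  obtain ⟨b0, hb0, hmin⟩ := Finset.exists_min_image s (fun b => obj c (toR b)) ⟨_, hbfalse⟩
  set x0 : Finset V → ℝ := toR b0 with hx0def
  have hx0 : feasible x0 := (Finset.mem_filter.mp hb0).2
  have hglob : ∀ x : Finset V → ℝ, feasible x → obj c x0 ≤ obj c x := by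
    intro x hxf
    set bx : Finset V → Bool := fun e => decide (x e = 1) with hbx
    have hag : ∀ e ∈ pairs V, toR bx e = x e := by
      intro e he
      rcases hxf.1 e he with h|h <;> rw [h] <;> simp [htoR, hbx, h] <;> norm_num
    have hobj : obj c (toR bx) = obj c x := obj_congr c hag
    have hfeasbx : feasible (toR bx) := feasible_congr hag hxf
    have hmem : bx ∈ s := by rw [hs, Finset.mem_filter]; exact ⟨Finset.mem_univ _, hfeasbx⟩
    have := hmin bx hmem
    rw [hobj] at this
    exact this
  -- case analysis on the optimal solution
  rcases hx0.1 {i,k} (pair_mem_pairs hik) with hik0|hik1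
  · rcases hx0.1 {i,j} (pair_mem_pairs hij) with hij0|hij1 <;>
      rcases hx0.1 {j,k} (pair_mem_pairs hjk) with hjk0|hjk1
    · -- all three pairs cut: isolate the triangle
      obtain ⟨x', hf, hle, hone⟩ := moveB_main c i j k hij hik hjk h3 x0 hx0 hij0 hik0 hjk0
      exact ⟨x', hf, fun y hy => le_trans hle (hglob y hy), hone⟩
    · -- x_ij = 0, x_jk = 1: join along R
      obtain ⟨x', hf, hle, hone⟩ :=
        moveA_main c i j k hij hik hjk R hR1 hR2 h1 x0 hx0 hij0 hik0 hjk1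
      exact ⟨x', hf, fun y hy => le_trans hle (hglob y hy), hone⟩
    · -- x_ij = 1, x_jk = 0: join along R', with roles of i and k swapped
      have htq : ({k,j,i}:Finset V) = ({i,j,k}:Finset V) := by
        ext z; simp; tauto
      have hkj : ({k,j}:Finset V) = ({j,k}:Finset V) := Finset.pair_comm k j
      have hki : ({k,i}:Finset V) = ({i,k}:Finset V) := Finset.pair_comm k i
      have hji : ({j,i}:Finset V) = ({i,j}:Finset V) := Finset.pair_comm j i
      have h2' : max (-(c {k,j,i})) 0 + 2 * max (-(c {k,j})) 0 + 2 * max (-(c {k,i})) 0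
          + ∑ t ∈ Tof {({k,j} : Finset V), ({k,i} : Finset V)}, max (-(c t)) 0 ≥
          ∑ t ∈ Tof (cut R'), |c t| + ∑ e ∈ cut R', |c e| := by
        rw [htq, hkj, hki]; exact h2
      obtain ⟨x', hf, hle, hone⟩ :=
        moveA_main c k j i hjk.symm hik.symm hij.symm R'
          (hkj ▸ hR'1) (hki ▸ hR'2) h2'
          x0 hx0 (hkj ▸ hjk0) (hki ▸ hik0) (hji ▸ hij1)
      exact ⟨x', hf, fun y hy => le_trans hle (hglob y hy), hki ▸ hone⟩
    · -- both x_ij = 1 and x_jk = 1 would force x_ik = 1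
      exfalso
      have := feasible_trans hx0 hij hjk hik hij1 hjk1
      rw [this] at hik0; norm_num at hik0
  · exact ⟨x0, hx0, hglob, hik1⟩


end Aux

/--
Let `S` be a finite nonempty set, `c` a cost function,
`{i,j,k} ∈ binom(S,3)`, and `R, R' ⊆ S` such that `{i,j}, {i,k} ∈ δ(R)` and
`{j,k}, {i,k} ∈ δ(R')`.  If
(1) `c_{ijk}⁻ + 2c_{ij}⁻ + 2c_{ik}⁻ + Σ_{T_{{{i,j},{i,k}}}} c_{pqr}⁻
      ≥ Σ_{T_{δ(R)}} |c_{pqr}| + Σ_{δ(R)} |c_{pq}|`,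
(2) `c_{ijk}⁻ + 2c_{jk}⁻ + 2c_{ik}⁻ + Σ_{T_{{{j,k},{i,k}}}} c_{pqr}⁻
      ≥ Σ_{T_{δ(R')}} |c_{pqr}| + Σ_{δ(R')} |c_{pq}|`, and
(3) `c_{ijk} + c_{ij} + c_{ik} + c_{jk}
      ≤ − Σ_{(T_{δ({i,j,k})} ∩ T⁻) ∖ T_{{{i,j},{i,k},{j,k}}}} |c_{pqr}|
        − Σ_{δ({i,j,k}) ∩ P⁻} |c_{pq}|`,
then there exists an optimal solution `x*` of `min_{x ∈ X_S} φ_c(x)` with `x*_{ik} = 1`.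
-/
theorem triangle_edge_join_persistency {V : Type*} [Fintype V] [DecidableEq V] [Nonempty V]
    (c : Finset V → ℝ) (i j k : V) (hij : i ≠ j) (hik : i ≠ k) (hjk : j ≠ k)
    (R R' : Finset V)
    (hR1 : ({i, j} : Finset V) ∈ cut R) (hR2 : ({i, k} : Finset V) ∈ cut R)
    (hR'1 : ({j, k} : Finset V) ∈ cut R') (hR'2 : ({i, k} : Finset V) ∈ cut R')
    (h1 : max (-(c {i, j, k})) 0 + 2 * max (-(c {i, j})) 0 + 2 * max (-(c {i, k})) 0
        + ∑ t ∈ Tof {({i, j} : Finset V), ({i, k} : Finset V)}, max (-(c t)) 0 ≥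
        ∑ t ∈ Tof (cut R), |c t| + ∑ e ∈ cut R, |c e|)
    (h2 : max (-(c {i, j, k})) 0 + 2 * max (-(c {j, k})) 0 + 2 * max (-(c {i, k})) 0
        + ∑ t ∈ Tof {({j, k} : Finset V), ({i, k} : Finset V)}, max (-(c t)) 0 ≥
        ∑ t ∈ Tof (cut R'), |c t| + ∑ e ∈ cut R', |c e|)
    (h3 : c {i, j, k} + c {i, j} + c {i, k} + c {j, k} ≤
        - ∑ t ∈ ((Tof (cut {i, j, k}) ∩ (triples V).filter fun t => c t < 0) \
            Tof {({i, j} : Finset V), ({i, k} : Finset V), ({j, k} : Finset V)}), |c t|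
        - ∑ e ∈ (cut {i, j, k}).filter (fun e => c e < 0), |c e|) :
    ∃ xstar : Finset V → ℝ, feasible xstar ∧
      (∀ x : Finset V → ℝ, feasible x → obj c xstar ≤ obj c x) ∧
      xstar {i, k} = 1 := by
  exact triangle_edge_join_persistency' c i j k hij hik hjk R R' hR1 hR2 hR'1 hR'2 h1 h2 h3
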